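/- For every n : ℕ, every 0 ≤ k ≤ n, and every real number d: Σ_{l=0}^{n} Σ_{j=0}^{min(l,k)} (n−l choose k−j) · (l choose j) · (n choose l) · (−1)^{j+l} · (d−1)^{j} · (d+1)^{n−j} = (if k = n then (2d)^n else 0). -/

import Mathlib

open Matrix Finset
open scoped BigOperators Kronecker ComplexOrder

noncomputable section

/-- The flip (swap) operator on `ℂ^d ⊗ ℂ^d`. -/
def Flip (d : ℕ) : Matrix (Fin d × Fin d) (Fin d × Fin d) ℂ :=
  Matrix.of fun p q => if p.1 = q.2 ∧ p.2 = q.1 then 1 else 0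

/-- Projection onto the symmetric subspace, `Π_s = (1 + F)/2`. -/
def projSym (d : ℕ) : Matrix (Fin d × Fin d) (Fin d × Fin d) ℂ :=
  (2 : ℂ)⁻¹ • (1 + Flip d)

/-- Projection onto the antisymmetric subspace, `Π_a = (1 - F)/2`. -/
def projAsym (d : ℕ) : Matrix (Fin d × Fin d) (Fin d × Fin d) ℂ :=
  (2 : ℂ)⁻¹ • (1 - Flip d)

/-- The symmetric Werner state `σ_d = (2/(d(d+1))) • Π_s`. -/
def wernerSym (d : ℕ) : Matrix (Fin d × Fin d) (Fin d × Fin d) ℂ :=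
  (2 / ((d : ℂ) * ((d : ℂ) + 1))) • projSym d

/-- The antisymmetric Werner state `α_d = (2/(d(d-1))) • Π_a`. -/
def wernerAsym (d : ℕ) : Matrix (Fin d × Fin d) (Fin d × Fin d) ℂ :=
  (2 / ((d : ℂ) * ((d : ℂ) - 1))) • projAsym d

/-- The POVM element `G_d`: diagonal, with `(i,j),(i,j)` entry `1` iff `i ≠ j`. -/
def Gmat (d : ℕ) : Matrix (Fin d × Fin d) (Fin d × Fin d) ℂ :=
  Matrix.diagonal fun p => if p.1 ≠ p.2 then 1 else 0

/-- `n`-fold tensor power of a matrix on `ℂ^d ⊗ ℂ^d`. -/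
def tpow {d : ℕ} (n : ℕ) (X : Matrix (Fin d × Fin d) (Fin d × Fin d) ℂ) :
    Matrix (Fin n → Fin d × Fin d) (Fin n → Fin d × Fin d) ℂ :=
  Matrix.of fun f g => ∏ m, X (f m) (g m)

/-- The twirled single-copy POVM element `M_d = ((d-1)/(d+1)) • Π_s + Π_a`. -/
def MdMat (d : ℕ) : Matrix (Fin d × Fin d) (Fin d × Fin d) ℂ :=
  (((d : ℂ) - 1) / ((d : ℂ) + 1)) • projSym d + projAsym d

/-- `A_k`: sum over all `k`-element subsets `S` of the copies of the tensor product with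
`Π_a` on copies in `S` and `Π_s` elsewhere. -/
def Amat (d n k : ℕ) : Matrix (Fin n → Fin d × Fin d) (Fin n → Fin d × Fin d) ℂ :=
  ∑ S ∈ Finset.powersetCard k (Finset.univ : Finset (Fin n)),
    Matrix.of fun f g => ∏ m, (if m ∈ S then projAsym d else projSym d) (f m) (g m)

/-- Partial transpose on `ℂ^d ⊗ ℂ^d`. -/
def pt {d : ℕ} (X : Matrix (Fin d × Fin d) (Fin d × Fin d) ℂ) :
    Matrix (Fin d × Fin d) (Fin d × Fin d) ℂ :=
  Matrix.of fun p q => X (p.1, q.2) (q.1, p.2)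

/-- The maximally entangled state `Φ_d`. -/
def Phi (d : ℕ) : Matrix (Fin d × Fin d) (Fin d × Fin d) ℂ :=
  Matrix.of fun p q => if p.1 = p.2 ∧ q.1 = q.2 then ((d : ℂ))⁻¹ else 0

/-- `n`-copy partial transpose. -/
def ptN {d n : ℕ} (Y : Matrix (Fin n → Fin d × Fin d) (Fin n → Fin d × Fin d) ℂ) :
    Matrix (Fin n → Fin d × Fin d) (Fin n → Fin d × Fin d) ℂ :=
  Matrix.of fun f g => Y (fun m => ((f m).1, (g m).2)) (fun m => ((g m).1, (f m).2))

/-- `T_l`: sum over all `l`-element subsets `S` of the copies of the tensor product with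
`Φ_d` on copies in `S` and `1 - Φ_d` elsewhere. -/
def Tmat (d n l : ℕ) : Matrix (Fin n → Fin d × Fin d) (Fin n → Fin d × Fin d) ℂ :=
  ∑ S ∈ Finset.powersetCard l (Finset.univ : Finset (Fin n)),
    Matrix.of fun f g => ∏ m, (if m ∈ S then Phi d else (1 - Phi d)) (f m) (g m)

/-- The matrix `Q` of the linear program: `Q l k = Σ_{j=0}^{min(l,k)}
(n−l choose k−j)(l choose j)(1−d)^j (1+d)^{l−j}`. -/
def Qmat (n : ℕ) (d : ℝ) (l k : ℕ) : ℝ :=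
  ∑ j ∈ Finset.range (min l k + 1),
    ((n - l).choose (k - j) : ℝ) * (l.choose j : ℝ) * (1 - d) ^ j * (1 + d) ^ (l - j)

/-- A PPT POVM element on the `n`-copy space: `E`, `1 - E`, `E^Γ`, `(1-E)^Γ` all PSD. -/
def IsPPTPovmElem {d n : ℕ}
    (E : Matrix (Fin n → Fin d × Fin d) (Fin n → Fin d × Fin d) ℂ) : Prop :=
  E.PosSemidef ∧ (1 - E).PosSemidef ∧ (ptN E).PosSemidef ∧ (ptN (1 - E)).PosSemidef

/-- Error probability for discriminating `σ_d^{⊗n}` (prior `p`) from `α_d^{⊗n}`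
(prior `1-p`) with the two-outcome POVM `{E, 1 - E}`. -/
def errProb (d n : ℕ) (p : ℝ)
    (E : Matrix (Fin n → Fin d × Fin d) (Fin n → Fin d × Fin d) ℂ) : ℝ :=
  ((p : ℂ) * (E * tpow n (wernerSym d)).trace
    + (1 - (p : ℂ)) * ((1 - E) * tpow n (wernerAsym d)).trace).re

/-- Separability of a bipartite matrix. -/
def IsSep {I J : Type*} [Fintype I] [Fintype J]
    (W : Matrix (I × J) (I × J) ℂ) : Prop :=
  ∃ (m : ℕ) (A : Fin m → Matrix I I ℂ) (B : Fin m → Matrix J J ℂ),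
    (∀ i, (A i).PosSemidef) ∧ (∀ i, (B i).PosSemidef) ∧ W = ∑ i, A i ⊗ₖ B i

/-- Trace norm `‖X‖₁ = Tr √(Xᴴ X)`. -/
def traceNorm {ι : Type*} [Fintype ι] [DecidableEq ι] (X : Matrix ι ι ℂ) : ℝ :=
  (((Matrix.posSemidef_conjTranspose_mul_self X).1.eigenvectorUnitary : Matrix ι ι ℂ) *
      Matrix.diagonal ((fun x : ℝ => (x : ℂ)) ∘ (fun x : ℝ => Real.sqrt x) ∘ (Matrix.posSemidef_conjTranspose_mul_self X).1.eigenvalues) *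
      (star (Matrix.posSemidef_conjTranspose_mul_self X).1.eigenvectorUnitary : Matrix ι ι ℂ)).trace.re

/-- Frobenius (Hilbert–Schmidt) norm `‖X‖₂ = √(Tr (Xᴴ X))`. -/
def frobNorm {ι : Type*} [Fintype ι] (X : Matrix ι ι ℂ) : ℝ :=
  Real.sqrt ((Xᴴ * X).trace.re)

/-! Since `C(n,l) C(l,j) C(n-l,k-j) = C(n,j) C(n-j,k-j) C(n-k,l-j)`, for fixed `j` the sum over
`l` is `C(n,j) C(n-j,k-j)` times the alternating sum `∑ₘ (-1)ᵐ C(n-k,m)`, which vanishes unless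
`k = n`. For `k = n` what remains is the binomial expansion of `((d - 1) + (d + 1))ⁿ`. -/

theorem Nat.choose_mul_choose_sub_comm (n a b : ℕ) :
    n.choose a * (n - a).choose b = n.choose b * (n - b).choose a := by
  have ha := Nat.choose_mul (n := n) (Nat.le_add_right a b)
  have hb := Nat.choose_mul (n := n) (Nat.le_add_left b a)
  rw [Nat.add_sub_cancel_left] at ha
  rw [Nat.add_sub_cancel] at hb
  rw [← ha, ← hb, Nat.choose_symm_add]

theorem Nat.choose_mul_choose_mul_choose_sub {n k j l : ℕ} (hjl : j ≤ l) (hjk : j ≤ k) :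
    n.choose l * l.choose j * (n - l).choose (k - j)
      = n.choose j * (n - j).choose (k - j) * (n - k).choose (l - j) := by
  have hl : n - j - (l - j) = n - l := by omega
  have hk : n - j - (k - j) = n - k := by omega
  rw [Nat.choose_mul hjl, mul_assoc, ← hl, Nat.choose_mul_choose_sub_comm, hk, ← mul_assoc]

theorem sum_range_neg_one_pow_mul_choose_of_lt {R : Type*} [Ring R] {p N : ℕ} (h : p < N) :
    ∑ m ∈ range N, (-1 : R) ^ m * p.choose m = if p = 0 then 1 else 0 := by
  rw [← sum_subset (range_subset_range.2 h) fun m _ hm => by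
    rw [Nat.choose_eq_zero_of_lt (by simpa using hm), Nat.cast_zero, mul_zero]]
  simpa using congrArg (Int.cast (R := R)) (Int.alternating_sum_range_choose (n := p))

theorem sum_range_neg_one_pow_mul_choose_mul_choose_mul_choose {R : Type*} [CommRing R]
    {n k j : ℕ} (hjk : j ≤ k) (hkn : k ≤ n) :
    ∑ l ∈ range (n + 1),
        (-1 : R) ^ (j + l) * (n.choose l * l.choose j * (n - l).choose (k - j) : ℕ)
      = if k = n then (n.choose j : R) else 0 := by
  obtain ⟨r, hr⟩ : ∃ r, n + 1 = j + r := ⟨n + 1 - j, by omega⟩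
  have below_j : ∑ l ∈ range j,
      (-1 : R) ^ (j + l) * (n.choose l * l.choose j * (n - l).choose (k - j) : ℕ) = 0 :=
    sum_eq_zero fun l hl => by
      rw [Nat.choose_eq_zero_of_lt (mem_range.1 hl), mul_zero, zero_mul, Nat.cast_zero, mul_zero]
  have shift : ∀ m ∈ range r,
      (-1 : R) ^ (j + (j + m))
          * (n.choose (j + m) * (j + m).choose j * (n - (j + m)).choose (k - j) : ℕ)
        = (n.choose j * (n - j).choose (k - j) : ℕ) * ((-1 : R) ^ m * (n - k).choose m) := by
    intro m _
    rw [Nat.choose_mul_choose_mul_choose_sub (Nat.le_add_right j m) hjk, Nat.add_sub_cancel_left,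
      ← add_assoc, pow_add, ← two_mul, pow_mul, neg_one_sq, one_pow, one_mul]
    push_cast
    ring
  rw [hr, sum_range_add, below_j, zero_add, sum_congr rfl shift, ← mul_sum,
    sum_range_neg_one_pow_mul_choose_of_lt (by omega)]
  rcases eq_or_lt_of_le hkn with rfl | hlt
  · simp
  · simp [Nat.sub_ne_zero_of_lt hlt, hlt.ne]

/-- the combinatorial identity behind `s_2(d,n;k) = δ_{nk} ((d−1)/(d+1))^n`. -/
theorem sum_s2 (n k : ℕ) (hk : k ≤ n) (d : ℝ) :
    ∑ l ∈ Finset.range (n + 1), ∑ j ∈ Finset.range (min l k + 1),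
        ((n - l).choose (k - j) : ℝ) * (l.choose j : ℝ) * (n.choose l : ℝ)
          * (-1 : ℝ) ^ (j + l) * (d - 1) ^ j * (d + 1) ^ (n - j)
      = if k = n then (2 * d) ^ n else 0 := by
  calc _ = ∑ l ∈ range (n + 1), ∑ j ∈ range (k + 1),
          (-1 : ℝ) ^ (j + l) * (n.choose l * l.choose j * (n - l).choose (k - j) : ℕ)
            * ((d - 1) ^ j * (d + 1) ^ (n - j)) := by
        refine sum_congr rfl fun l _ => ?_
        refine (sum_subset (range_subset_range.2 (by omega)) fun j hjk hj => ?_).trans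
          (sum_congr rfl fun j _ => ?_)
        · rw [Nat.choose_eq_zero_of_lt (n := l) (k := j) (by rw [mem_range] at hjk hj; omega)]
          simp
        · push_cast
          ring
    _ = ∑ j ∈ range (k + 1), (if k = n then (n.choose j : ℝ) else 0)
          * ((d - 1) ^ j * (d + 1) ^ (n - j)) := by
        rw [sum_comm]
        refine sum_congr rfl fun j hj => ?_
        rw [← sum_mul, sum_range_neg_one_pow_mul_choose_mul_choose_mul_choose
          (Nat.lt_succ_iff.1 (mem_range.1 hj)) hk]
    _ = if k = n then (2 * d) ^ n else 0 := by
        split_ifs with hkn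
        · rw [hkn, show 2 * d = (d - 1) + (d + 1) by ring, add_pow]
          exact sum_congr rfl fun j _ => by ring
        · simp

end
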